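/- arXiv:2106.13021 — 5 statements merged into one kernel-verified Lean document; each statement's English description precedes it below -/
import Mathlib

section
/- For any β ∈ (0,1)^n with ‖β‖₁ ≤ 1 and any w in the relative interior of the probability simplex Δⁿ, the minimizer p of the relative entropy D(u‖w) = Σᵢ uᵢ ln(uᵢ/wᵢ) over the convex set C(β) = {x ∈ Δⁿ : xᵢ ≥ βᵢ for all i} satisfies pᵢ = max{βᵢ, λ·wᵢ} for all i, where Ψ = {i : pᵢ = βᵢ} and λ = (1 - Σ_{j∈Ψ} βⱼ)/(1 - Σ_{j∈Ψ} wⱼ). -/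
open Finset Real
open scoped Classical

lemma tangent_le (x y w : ℝ) (hx : 0 ≤ x) (hy : 0 < y) (hw : 0 < w) :
    y * Real.log (y/w) + (x - y) * (1 + Real.log (y/w)) ≤ x * Real.log (x/w) := by
  rcases eq_or_lt_of_le hx with h0 | hx
  · subst h0
    simp
    nlinarith [hy]
  · have hlog : Real.log (y/x) ≤ y/x - 1 := Real.log_le_sub_one_of_pos (by positivity)
    have h1 : Real.log (y/x) = Real.log y - Real.log x := Real.log_div hy.ne' hx.ne'
    have h2 : Real.log (y/w) = Real.log y - Real.log w := Real.log_div hy.ne' hw.ne'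
    have h3 : Real.log (x/w) = Real.log x - Real.log w := Real.log_div hx.ne' hw.ne'
    have key : x - y ≤ x * (Real.log x - Real.log y) := by
      have := mul_le_mul_of_nonneg_left hlog hx.le
      rw [h1] at this
      have hxy : x * (y/x - 1) = y - x := by field_simp
      nlinarith
    nlinarith

lemma tangent_lt (x y w : ℝ) (hx : 0 ≤ x) (hy : 0 < y) (hw : 0 < w) (hne : x ≠ y) :
    y * Real.log (y/w) + (x - y) * (1 + Real.log (y/w)) < x * Real.log (x/w) := by
  rcases eq_or_lt_of_le hx with h0 | hx
  · subst h0
    simp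
    nlinarith [hy]
  · have hne1 : y/x ≠ 1 := by
      intro h
      apply hne
      field_simp at h
      exact h.symm
    have hlog : Real.log (y/x) < y/x - 1 := Real.log_lt_sub_one_of_pos (by positivity) hne1
    have h1 : Real.log (y/x) = Real.log y - Real.log x := Real.log_div hy.ne' hx.ne'
    have h2 : Real.log (y/w) = Real.log y - Real.log w := Real.log_div hy.ne' hw.ne'
    have h3 : Real.log (x/w) = Real.log x - Real.log w := Real.log_div hx.ne' hw.ne'
    have key : x - y < x * (Real.log x - Real.log y) := by
      have := mul_lt_mul_of_pos_left hlog hx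
      rw [h1] at this
      have hxy : x * (y/x - 1) = y - x := by field_simp
      nlinarith
    nlinarith

/-- form of the relative entropy projection onto the simplex with
lower box constraints. -/
theorem stmt_0 (n : ℕ) (β w p : Fin n → ℝ)
    (hβ : ∀ i, β i ∈ Set.Ioo (0:ℝ) 1) (hβ1 : ∑ i, β i ≤ 1)
    (hw : ∀ i, 0 < w i) (hw1 : ∑ i, w i = 1)
    (hpC : (∀ i, β i ≤ p i) ∧ (∀ i, 0 ≤ p i) ∧ ∑ i, p i = 1)
    (hmin : ∀ u : Fin n → ℝ, (∀ i, β i ≤ u i) → (∀ i, 0 ≤ u i) → ∑ i, u i = 1 →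
      ∑ i, p i * Real.log (p i / w i) ≤ ∑ i, u i * Real.log (u i / w i)) :
    ∀ i, p i = max (β i)
      ((1 - ∑ j ∈ Finset.univ.filter (fun j => p j = β j), β j) /
       (1 - ∑ j ∈ Finset.univ.filter (fun j => p j = β j), w j) * w i) := by
  obtain ⟨hpβ, hp0, hp1⟩ := hpC
  set Ψ := Finset.univ.filter (fun j => p j = β j) with hΨ
  rcases eq_or_lt_of_le hβ1 with hβeq | hβlt
  · -- case ∑ β = 1 : feasibility forces p = β
    have hsum0 : ∑ i, (p i - β i) = 0 := by
      rw [Finset.sum_sub_distrib, hp1, hβeq]; ring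
    have hpe : ∀ i, p i = β i := by
      intro i
      have := (Finset.sum_eq_zero_iff_of_nonneg
        (fun j _ => by linarith [hpβ j])).mp hsum0 i (Finset.mem_univ i)
      linarith
    have hΨu : Ψ = Finset.univ := by
      ext j; simp [hΨ, hpe j]
    intro i
    rw [hΨu]
    have hz : (1 - ∑ j, β j) = 0 := by rw [hβeq]; ring
    rw [hz, zero_div, zero_mul, hpe i]
    exact (max_eq_left (hβ i).1.le).symm
  · -- case ∑ β < 1 : water-filling
    have hcont : Continuous (fun t : ℝ => ∑ i, max (β i) (t * w i)) := by
      apply continuous_finset_sum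
      intro i _
      exact continuous_const.max (continuous_id.mul continuous_const)
    have h0 : (fun t : ℝ => ∑ i, max (β i) (t * w i)) 0 = ∑ i, β i := by
      simp only [zero_mul]
      exact Finset.sum_congr rfl (fun i _ => max_eq_left (hβ i).1.le)
    have h1 : (1:ℝ) ≤ (fun t : ℝ => ∑ i, max (β i) (t * w i)) 1 := by
      simp only [one_mul]
      calc (1:ℝ) = ∑ i, w i := hw1.symm
        _ ≤ ∑ i, max (β i) (w i) := Finset.sum_le_sum (fun i _ => le_max_right _ _)
    have hIVT := intermediate_value_Icc (by norm_num : (0:ℝ) ≤ 1) hcont.continuousOn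
    have h1mem : (1:ℝ) ∈ Set.Icc ((fun t : ℝ => ∑ i, max (β i) (t * w i)) 0)
        ((fun t : ℝ => ∑ i, max (β i) (t * w i)) 1) := ⟨by rw [h0]; exact hβlt.le, h1⟩
    obtain ⟨t, ht01, ht⟩ := hIVT h1mem
    have htpos : 0 < t := by
      rcases lt_or_eq_of_le ht01.1 with h | h
      · exact h
      · exfalso; rw [← h] at ht; rw [h0] at ht; linarith
    set q : Fin n → ℝ := fun i => max (β i) (t * w i) with hqdef
    have hqβ : ∀ i, β i ≤ q i := fun i => le_max_left _ _
    have hq0 : ∀ i, 0 < q i := fun i => lt_of_lt_of_le (hβ i).1 (hqβ i)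
    have hq1 : ∑ i, q i = 1 := ht
    have hqlog : ∀ i, Real.log t ≤ Real.log (q i / w i) := by
      intro i
      rcases le_or_gt (β i) (t * w i) with h | h
      · have : q i = t * w i := max_eq_right h
        rw [this, mul_div_assoc, div_self (hw i).ne', mul_one]
      · have hqi : q i = β i := max_eq_left h.le
        have : t < q i / w i := by
          rw [hqi, lt_div_iff₀ (hw i)]; linarith
        exact Real.log_le_log htpos this.le
    have hterm : ∀ i, (p i - q i) * Real.log t ≤ (p i - q i) * Real.log (q i / w i) := by
      intro i
      rcases le_or_gt (β i) (t * w i) with h | h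
      · have hqi : q i = t * w i := max_eq_right h
        have : Real.log (q i / w i) = Real.log t := by
          rw [hqi, mul_div_assoc, div_self (hw i).ne', mul_one]
        rw [this]
      · have hqi : q i = β i := max_eq_left h.le
        have hnn : 0 ≤ p i - q i := by rw [hqi]; linarith [hpβ i]
        exact mul_le_mul_of_nonneg_left (hqlog i) hnn
    have hsub0 : ∑ i, (p i - q i) = 0 := by
      rw [Finset.sum_sub_distrib, hp1, hq1]; ring
    have hT : 0 ≤ ∑ i, (p i - q i) * (1 + Real.log (q i / w i)) := by
      have e1 : ∑ i, (p i - q i) * (1 + Real.log (q i / w i))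
          = ∑ i, (p i - q i) + ∑ i, (p i - q i) * Real.log (q i / w i) := by
        rw [← Finset.sum_add_distrib]
        exact Finset.sum_congr rfl (fun i _ => by ring)
      have e2 : ∑ i, (p i - q i) * Real.log t = 0 := by
        rw [← Finset.sum_mul, hsub0, zero_mul]
      have e3 : ∑ i, (p i - q i) * Real.log t
          ≤ ∑ i, (p i - q i) * Real.log (q i / w i) :=
        Finset.sum_le_sum (fun i _ => hterm i)
      rw [e1, hsub0]
      linarith
    have hpq : ∀ i, p i = q i := by
      by_contra hc
      push_neg at hc
      obtain ⟨i0, hi0⟩ := hc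
      have hstrict : ∑ i, (q i * Real.log (q i / w i)
            + (p i - q i) * (1 + Real.log (q i / w i)))
          < ∑ i, p i * Real.log (p i / w i) :=
        Finset.sum_lt_sum
          (fun i _ => tangent_le _ _ _ (hp0 i) (hq0 i) (hw i))
          ⟨i0, Finset.mem_univ _, tangent_lt _ _ _ (hp0 i0) (hq0 i0) (hw i0) hi0⟩
      have hle := hmin q hqβ (fun i => (hq0 i).le) hq1
      rw [Finset.sum_add_distrib] at hstrict
      linarith
    -- membership characterization
    have hmem : ∀ j, (p j = β j) ↔ t * w j ≤ β j := by
      intro j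
      constructor
      · intro h
        have hq : q j = β j := (hpq j).symm.trans h
        have : max (β j) (t * w j) = β j := hq
        exact max_eq_left_iff.mp this
      · intro h
        rw [hpq j]
        exact max_eq_left h
    -- Ψ ≠ univ
    have hΨne : ∃ j, j ∉ Ψ := by
      by_contra hc
      push_neg at hc
      have : ∀ j, p j = β j := by
        intro j
        have := hc j
        rw [hΨ, Finset.mem_filter] at this
        exact this.2
      have : ∑ i, p i = ∑ i, β i := Finset.sum_congr rfl (fun i _ => this i)
      rw [hp1] at this
      linarith
    obtain ⟨j0, hj0⟩ := hΨne
    have hΨw : ∑ j ∈ Ψ, w j < 1 := by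
      have hsub : Ψ ⊆ Finset.univ.erase j0 := by
        intro j hj
        rw [Finset.mem_erase]
        exact ⟨fun h => hj0 (h ▸ hj), Finset.mem_univ j⟩
      have h1 : ∑ j ∈ Ψ, w j ≤ ∑ j ∈ Finset.univ.erase j0, w j :=
        Finset.sum_le_sum_of_subset_of_nonneg hsub (fun j _ _ => (hw j).le)
      have h2 : ∑ j ∈ Finset.univ.erase j0, w j = 1 - w j0 := by
        have := Finset.add_sum_erase Finset.univ w (Finset.mem_univ j0)
        rw [hw1] at this
        linarith
      have := hw j0
      linarith [h1, h2.le]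
    -- numerator identity
    have hsplitp := Finset.sum_filter_add_sum_filter_not Finset.univ (fun j => p j = β j) p
    have hsplitw := Finset.sum_filter_add_sum_filter_not Finset.univ (fun j => p j = β j) w
    have hpΨ : ∑ j ∈ Ψ, p j = ∑ j ∈ Ψ, β j := by
      apply Finset.sum_congr rfl
      intro j hj
      rw [hΨ, Finset.mem_filter] at hj
      exact hj.2
    have hpΨc : ∑ j ∈ Finset.univ.filter (fun j => ¬ p j = β j), p j
        = t * ∑ j ∈ Finset.univ.filter (fun j => ¬ p j = β j), w j := by
      rw [Finset.mul_sum]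
      apply Finset.sum_congr rfl
      intro j hj
      rw [Finset.mem_filter] at hj
      have hnle : ¬ t * w j ≤ β j := fun h => hj.2 ((hmem j).mpr h)
      rw [hpq j]
      exact max_eq_right (le_of_not_ge hnle)
    have hnum : 1 - ∑ j ∈ Ψ, β j = t * (1 - ∑ j ∈ Ψ, w j) := by
      rw [← hΨ] at hsplitp hsplitw
      rw [hp1] at hsplitp
      rw [hw1] at hsplitw
      nlinarith [hsplitp, hsplitw, hpΨ, hpΨc]
    intro i
    have hD : (1 : ℝ) - ∑ j ∈ Ψ, w j ≠ 0 := by linarith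
    rw [hnum, mul_div_assoc, div_self hD, mul_one]
    exact hpq i
end

section
/- Let β ∈ (0,1)^n with ‖β‖₁ ≤ 1, w ∈ relint(Δⁿ), and let p be the relative entropy projection of w onto C(β) = {x ∈ Δⁿ : x ≥ β componentwise}. Then the normalizing constant λ = (1 - Σ_{j∈Ψ} βⱼ)/(1 - Σ_{j∈Ψ} wⱼ), where Ψ = {i : pᵢ = βᵢ}, satisfies λ ≤ 1. -/
open Finset Real Filter Topology
open scoped Classical

/-! If `β i < p i`, shifting a little mass from coordinate `i` to any coordinate `j` stays in
`C(β)`, and comparing first-order terms (via the tangent inequality of `x ↦ x log (x / w)`) gives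
`p i / w i ≤ p j / w j`. So if some `i ∉ Ψ` had `p i > w i`, every coordinate would have
`p j > w j`, contradicting `∑ p = ∑ w = 1`; hence the coordinates outside `Ψ` carry no more
`p`-mass than `w`-mass, which is `λ ≤ 1`. -/

noncomputable def relEntropy {ι : Type*} [Fintype ι] (u w : ι → ℝ) : ℝ :=
  ∑ i, u i * log (u i / w i)

lemma mul_log_div_sub_mul_log_div_le {x y w : ℝ} (hx : 0 < x) (hy : 0 < y) (hw : 0 < w) :
    x * log (x / w) - y * log (y / w) ≤ (x - y) * (log (x / w) + 1) := by
  have hlog : log (x / w) - log (y / w) = log (x / y) := by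
    rw [log_div hx.ne' hw.ne', log_div hy.ne' hw.ne', log_div hx.ne' hy.ne']
    ring
  have hxy : y * log (x / y) ≤ x - y := by
    calc y * log (x / y) ≤ y * (x / y - 1) :=
          mul_le_mul_of_nonneg_left (log_le_sub_one_of_pos (by positivity)) hy.le
      _ = x - y := by field_simp
  nlinarith

lemma sum_sub_sum_eq_of_eqOn_compl_pair {ι : Type*} [Fintype ι] {f g : ι → ℝ} {i j : ι}
    (hij : i ≠ j) (h : ∀ k, k ≠ i → k ≠ j → f k = g k) :
    ∑ k, f k - ∑ k, g k = (f i - g i) + (f j - g j) := by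
  rw [← Finset.sum_sub_distrib]
  exact Fintype.sum_eq_add i j hij fun k hk => sub_eq_zero.2 (h k hk.1 hk.2)

section Minimizer

variable {ι : Type*} [Fintype ι] [DecidableEq ι] {β w p : ι → ℝ}
  (hβ : ∀ k, 0 < β k) (hw : ∀ k, 0 < w k) (hpβ : ∀ k, β k ≤ p k)
  (hmin : IsMinOn (relEntropy · w) {u | (∀ k, β k ≤ u k) ∧ ∑ k, u k = ∑ k, p k} p)
include hβ hw hpβ hmin

lemma sub_div_le_add_div_of_isMinOn_relEntropy {i j : ι} (hij : i ≠ j) {t : ℝ}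
    (ht : t ∈ Set.Ioo 0 (p i - β i)) :
    (p i - t) / w i ≤ (p j + t) / w j := by
  obtain ⟨ht0, hti⟩ := ht
  set u := Function.update (Function.update p i (p i - t)) j (p j + t)
  have hui : u i = p i - t := by simp [u, hij]
  have huj : u j = p j + t := by simp [u]
  have huk : ∀ k, k ≠ i → k ≠ j → u k = p k := fun k hki hkj => by simp [u, hki, hkj]
  have hpi : 0 < p i - t := by linarith [hβ i]
  have hpj : 0 < p j := (hβ j).trans_le (hpβ j)
  have hu_mem : ∀ k, β k ≤ u k := by
    intro k
    by_cases hkj : k = j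
    · subst hkj; rw [huj]; linarith [hpβ k]
    by_cases hki : k = i
    · subst hki; rw [hui]; linarith
    · rw [huk k hki hkj]; exact hpβ k
  have hu_sum : ∑ k, u k = ∑ k, p k := by
    have := sum_sub_sum_eq_of_eqOn_compl_pair hij huk
    rw [hui, huj] at this
    linarith
  have hgain : 0 ≤ relEntropy u w - relEntropy p w :=
    sub_nonneg.2 (isMinOn_iff.1 hmin u ⟨hu_mem, hu_sum⟩)
  rw [relEntropy, relEntropy, sum_sub_sum_eq_of_eqOn_compl_pair hij fun k hki hkj => by
    rw [huk k hki hkj], hui, huj] at hgain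
  have hlog : log ((p i - t) / w i) ≤ log ((p j + t) / w j) := by
    refine le_of_mul_le_mul_left ?_ ht0
    nlinarith [mul_log_div_sub_mul_log_div_le hpi ((hβ i).trans_le (hpβ i)) (hw i),
      mul_log_div_sub_mul_log_div_le (by linarith : 0 < p j + t) hpj (hw j)]
  exact (log_le_log_iff (div_pos hpi (hw i)) (div_pos (by linarith) (hw j))).1 hlog

lemma div_le_div_of_isMinOn_relEntropy {i : ι} (hi : β i < p i) (j : ι) :
    p i / w i ≤ p j / w j := by
  rcases eq_or_ne i j with rfl | hij
  · rfl
  have hleft : Tendsto (fun t => (p i - t) / w i) (𝓝[>] 0) (𝓝 (p i / w i)) := by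
    refine tendsto_nhdsWithin_of_tendsto_nhds ?_
    simpa using ((continuous_const.sub continuous_id).div_const (w i)).tendsto 0
  have hright : Tendsto (fun t => (p j + t) / w j) (𝓝[>] 0) (𝓝 (p j / w j)) := by
    refine tendsto_nhdsWithin_of_tendsto_nhds ?_
    simpa using ((continuous_const.add continuous_id).div_const (w j)).tendsto 0
  refine le_of_tendsto_of_tendsto hleft hright ?_
  filter_upwards [Ioo_mem_nhdsGT (sub_pos.2 hi)] with t ht
  exact sub_div_le_add_div_of_isMinOn_relEntropy hβ hw hpβ hmin hij ht

lemma sum_filter_ne_le_of_isMinOn_relEntropy (hpw : ∑ k, p k = ∑ k, w k) :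
    ∑ k ∈ univ.filter (fun k => p k ≠ β k), p k ≤
      ∑ k ∈ univ.filter (fun k => p k ≠ β k), w k := by
  by_contra! hlt
  obtain ⟨i, hi, hwi⟩ := exists_lt_of_sum_lt hlt
  have hi : β i < p i := (hpβ i).lt_of_ne (mem_filter.1 hi).2.symm
  have hall : ∀ k ∈ univ, w k < p k := fun k _ => by
    have hik := div_le_div_of_isMinOn_relEntropy hβ hw hpβ hmin hi k
    have : 1 < p k / w k := ((one_lt_div (hw i)).2 hwi).trans_le hik
    exact (one_lt_div (hw k)).1 this
  exact (sum_lt_sum_of_nonempty ⟨i, mem_univ i⟩ hall).ne' hpw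

end Minimizer

theorem stmt_1_general (n : ℕ) (β w p : Fin n → ℝ)
    (hβ : ∀ i, β i ∈ Set.Ioo (0:ℝ) 1)
    (hw : ∀ i, 0 < w i) (hw1 : ∑ i, w i = 1)
    (hpC : (∀ i, β i ≤ p i) ∧ (∀ i, 0 ≤ p i) ∧ ∑ i, p i = 1)
    (hmin : ∀ u : Fin n → ℝ, (∀ i, β i ≤ u i) → (∀ i, 0 ≤ u i) → ∑ i, u i = 1 →
      ∑ i, p i * Real.log (p i / w i) ≤ ∑ i, u i * Real.log (u i / w i)) :
    (1 - ∑ j ∈ Finset.univ.filter (fun j => p j = β j), β j) /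
      (1 - ∑ j ∈ Finset.univ.filter (fun j => p j = β j), w j) ≤ 1 := by
  obtain ⟨hpβ, -, hp1⟩ := hpC
  have hβ0 : ∀ i, 0 < β i := fun i => (hβ i).1
  have hnum : 1 - ∑ j ∈ univ.filter (fun j => p j = β j), β j
      = ∑ j ∈ univ.filter (fun j => p j ≠ β j), p j := by
    rw [← hp1, ← sum_filter_add_sum_filter_not univ (fun j => p j = β j) p,
      sum_congr rfl fun j hj => (mem_filter.1 hj).2]
    ring
  have hden : 1 - ∑ j ∈ univ.filter (fun j => p j = β j), w j
      = ∑ j ∈ univ.filter (fun j => p j ≠ β j), w j := by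
    rw [← hw1, ← sum_filter_add_sum_filter_not univ (fun j => p j = β j) w]
    ring
  rw [hnum, hden]
  refine div_le_one_of_le₀ ?_ (sum_nonneg fun j _ => (hw j).le)
  refine sum_filter_ne_le_of_isMinOn_relEntropy hβ0 hw hpβ ?_ (hp1.trans hw1.symm)
  exact isMinOn_iff.2 fun u ⟨hu, hsum⟩ =>
    hmin u hu (fun i => (hβ0 i).le.trans (hu i)) (hsum.trans hp1)

/-- the normalizing constant of the relative entropy projection
is at most 1. -/
theorem stmt_1 (n : ℕ) (β w p : Fin n → ℝ)
    (hβ : ∀ i, β i ∈ Set.Ioo (0:ℝ) 1) (hβ1 : ∑ i, β i ≤ 1)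
    (hw : ∀ i, 0 < w i) (hw1 : ∑ i, w i = 1)
    (hpC : (∀ i, β i ≤ p i) ∧ (∀ i, 0 ≤ p i) ∧ ∑ i, p i = 1)
    (hmin : ∀ u : Fin n → ℝ, (∀ i, β i ≤ u i) → (∀ i, 0 ≤ u i) → ∑ i, u i = 1 →
      ∑ i, p i * Real.log (p i / w i) ≤ ∑ i, u i * Real.log (u i / w i)) :
    (1 - ∑ j ∈ Finset.univ.filter (fun j => p j = β j), β j) /
      (1 - ∑ j ∈ Finset.univ.filter (fun j => p j = β j), w j) ≤ 1 :=
  stmt_1_general n β w p hβ hw hw1 hpC hmin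
end

section
/- Let 0 ≤ α, θ ≤ 1, and let (w·_q)_{q≥0} be a sequence of vectors in Δⁿ with w·_0 = (1/n)1. Define v_1 = (1/n)1, and recursively v_{t+1} = (1−θ)v_t + θ·w·_t and w_{t+1} = (1−α)w·_t + α·v_t. Then for all t ≥ 1, v_t = Σ_{q=0}^{t−1} θ^{[q≠0]}(1−θ)^{t−q−1} w·_q and w_{t+1} = Σ_{q=0}^{t} γ_q^t w·_q, where γ_t^t = 1−α, γ_q^t = θ(1−θ)^{t−q−1}α for 1 ≤ q < t, and γ_0^t = (1−θ)^{t−1}α. -/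
open Finset Real

/-- the Share-θ recursion is Mixing Past Posteriors with a
geometrically-decaying mixing scheme. -/
theorem stmt_8 (n : ℕ) (α θ : ℝ) (hα0 : 0 ≤ α) (hα1 : α ≤ 1) (hθ0 : 0 ≤ θ) (hθ1 : θ ≤ 1)
    (wdot : ℕ → Fin n → ℝ)
    (hwdot : ∀ t, (∀ i, 0 ≤ wdot t i) ∧ ∑ i, wdot t i = 1)
    (hwdot0 : ∀ i, wdot 0 i = 1 / n)
    (v w : ℕ → Fin n → ℝ)
    (hv1 : ∀ i, v 1 i = 1 / n)
    (hvrec : ∀ t, 1 ≤ t → ∀ i, v (t + 1) i = (1 - θ) * v t i + θ * wdot t i)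
    (hwrec : ∀ t, 1 ≤ t → ∀ i, w (t + 1) i = (1 - α) * wdot t i + α * v t i) :
    ∀ t, 1 ≤ t →
      (∀ i, v t i =
        ∑ q ∈ Finset.range t, (if q = 0 then (1:ℝ) else θ) * (1 - θ) ^ (t - q - 1) * wdot q i) ∧
      (∀ i, w (t + 1) i =
        (1 - α) * wdot t i
          + (∑ q ∈ Finset.Ico 1 t, θ * (1 - θ) ^ (t - q - 1) * α * wdot q i)
          + (1 - θ) ^ (t - 1) * α * wdot 0 i) := by
  -- first prove the v formula by induction
  have hvform : ∀ t, 1 ≤ t → ∀ i, v t i =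
      ∑ q ∈ Finset.range t, (if q = 0 then (1:ℝ) else θ) * (1 - θ) ^ (t - q - 1) * wdot q i := by
    intro t ht
    induction t with
    | zero => omega
    | succ t ih =>
      rcases Nat.eq_or_lt_of_le ht with h1 | h1
      · -- t + 1 = 1, i.e. t = 0
        have ht0 : t = 0 := by omega
        subst ht0
        intro i
        simp [hv1 i, hwdot0 i]
      · have ht1 : 1 ≤ t := by omega
        intro i
        rw [hvrec t ht1 i, ih ht1 i, Finset.sum_range_succ]
        have htne : t ≠ 0 := by omega
        rw [if_neg htne]
        have he : t + 1 - t - 1 = 0 := by omega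
        rw [he, Finset.mul_sum]
        congr 1
        · apply Finset.sum_congr rfl
          intro q hq
          have hqlt : q < t := Finset.mem_range.mp hq
          have : t + 1 - q - 1 = (t - q - 1) + 1 := by omega
          rw [this]
          ring
        · simp
  intro t ht
  refine ⟨hvform t ht, fun i => ?_⟩
  rw [hwrec t ht i, hvform t ht i]
  have hsplit : Finset.range t = insert 0 (Finset.Ico 1 t) := by
    ext q
    simp [Finset.mem_range, Finset.mem_Ico]
    omega
  rw [hsplit, Finset.sum_insert (by simp), mul_add, Finset.mul_sum]
  rw [if_pos rfl]
  have : ∀ q ∈ Finset.Ico 1 t,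
      α * ((if q = 0 then (1:ℝ) else θ) * (1 - θ) ^ (t - q - 1) * wdot q i)
        = θ * (1 - θ) ^ (t - q - 1) * α * wdot q i := by
    intro q hq
    have : q ≠ 0 := by have := (Finset.mem_Ico.mp hq).1; omega
    rw [if_neg this]; ring
  rw [Finset.sum_congr rfl this]
  have : t - 0 - 1 = t - 1 := by omega
  rw [this]
  ring
end

section
/- Let 0 < α < 1, 0 < θ < 1, η > 0, π_w = θ/(α+θ), π_s = α/(α+θ). Define sequences a_t, s_t ∈ (0,∞)^n by a_1 = (π_w/n)1, s_1 = (π_s/n)1, and given nonnegative losses ℓ_{t,i}: a_{t+1,i} = (1−α)·(a_{t,i} e^{−ηℓ_{t,i}}(Σⱼ a_{t,j}))/(Σⱼ a_{t,j} e^{−ηℓ_{t,j}}) + θ s_{t,i} and s_{t+1,i} = α·(a_{t,i} e^{−ηℓ_{t,i}}(Σⱼ a_{t,j}))/(Σⱼ a_{t,j} e^{−ηℓ_{t,j}}) + (1−θ)s_{t,i}. Define also w_1 = v_1 = (1/n)1, ẇ_{t,i} = w_{t,i}e^{−ηℓ_{t,i}}/Σⱼ w_{t,j}e^{−ηℓ_{t,j}},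 w_{t+1} = (1−α)ẇ_t + αv_t, v_{t+1} = (1−θ)v_t + θẇ_t. Then for all t ≥ 1, a_t = π_w · w_t and s_t = π_s · v_t; in particular Σᵢ a_{t,i} = π_w and Σᵢ s_{t,i} = π_s for all t. -/
open Finset Real

/-!
Share-θ keeps two probability vectors, `w` for the awake and `v` for the sleeping specialists,
so its Bayesian normaliser never vanishes. The partition-specialists update is the same update
written for the masses `a = π_w w` and `s = π_s v`: the loss update only rescales by the total
mass, and the two mixing steps agree because of detailed balance `θ π_s = α π_w`.
Induction on `t` then gives `a_t = π_w w_t` and `s_t = π_s v_t`.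
-/

section Posterior

variable {ι : Type*} [Fintype ι]

noncomputable def posterior (β w : ι → ℝ) (i : ι) : ℝ :=
  w i * β i / ∑ j, w j * β j

noncomputable def massPosterior (β a : ι → ℝ) (i : ι) : ℝ :=
  a i * β i * (∑ j, a j) / ∑ j, a j * β j

theorem mem_stdSimplex_of_eq_one_div_card [Nonempty ι] {u : ι → ℝ}
    (hu : ∀ i, u i = 1 / Fintype.card ι) : u ∈ stdSimplex ℝ ι := by
  refine ⟨fun i ↦ by rw [hu]; positivity, ?_⟩
  simp [hu, Finset.card_univ]

theorem posterior_mem_stdSimplex {β w : ι → ℝ} (hβ : ∀ i, 0 < β i)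
    (hw : w ∈ stdSimplex ℝ ι) : posterior β w ∈ stdSimplex ℝ ι := by
  obtain ⟨hw0, hw1⟩ := hw
  obtain ⟨k, -, hk⟩ := Finset.exists_ne_zero_of_sum_ne_zero (hw1.symm ▸ one_ne_zero)
  have hD : 0 < ∑ j, w j * β j :=
    Finset.sum_pos' (fun j _ ↦ mul_nonneg (hw0 j) (hβ j).le)
      ⟨k, mem_univ k, mul_pos ((hw0 k).lt_of_ne' hk) (hβ k)⟩
  refine ⟨fun i ↦ div_nonneg (mul_nonneg (hw0 i) (hβ i).le) hD.le, ?_⟩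
  simp only [posterior, ← Finset.sum_div, div_self hD.ne']

theorem massPosterior_smul {β w : ι → ℝ} (hw : ∑ i, w i = 1) (c : ℝ) :
    massPosterior β (c • w) = c • posterior β w := by
  funext i
  rcases eq_or_ne c 0 with rfl | hc
  · simp [massPosterior]
  · simp only [massPosterior, posterior, Pi.smul_apply, smul_eq_mul, ← Finset.mul_sum, hw,
      mul_assoc]
    rw [mul_div_mul_left _ _ hc]
    ring

end Posterior

section Steps

variable {ι : Type*} [Fintype ι]

noncomputable def shareAwake (α : ℝ) (β w v : ι → ℝ) : ι → ℝ :=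
  (1 - α) • posterior β w + α • v

noncomputable def shareAsleep (θ : ℝ) (β w v : ι → ℝ) : ι → ℝ :=
  (1 - θ) • v + θ • posterior β w

noncomputable def specialistsAwake (α θ : ℝ) (β a s : ι → ℝ) : ι → ℝ :=
  (1 - α) • massPosterior β a + θ • s

noncomputable def specialistsAsleep (α θ : ℝ) (β a s : ι → ℝ) : ι → ℝ :=
  α • massPosterior β a + (1 - θ) • s

variable {α θ πw πs : ℝ} {β w v : ι → ℝ}

theorem shareAwake_mem_stdSimplex (hβ : ∀ i, 0 < β i) (hα : 0 ≤ α) (hα1 : α ≤ 1)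
    (hw : w ∈ stdSimplex ℝ ι) (hv : v ∈ stdSimplex ℝ ι) :
    shareAwake α β w v ∈ stdSimplex ℝ ι :=
  convex_stdSimplex ℝ ι (posterior_mem_stdSimplex hβ hw) hv (by linarith) hα (by ring)

theorem shareAsleep_mem_stdSimplex (hβ : ∀ i, 0 < β i) (hθ : 0 ≤ θ) (hθ1 : θ ≤ 1)
    (hw : w ∈ stdSimplex ℝ ι) (hv : v ∈ stdSimplex ℝ ι) :
    shareAsleep θ β w v ∈ stdSimplex ℝ ι :=
  convex_stdSimplex ℝ ι hv (posterior_mem_stdSimplex hβ hw) (by linarith) hθ (by ring)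

theorem specialistsAwake_smul (hw : ∑ i, w i = 1) (hbal : θ * πs = α * πw) :
    specialistsAwake α θ β (πw • w) (πs • v) = πw • shareAwake α β w v := by
  rw [specialistsAwake, shareAwake, massPosterior_smul hw]
  linear_combination (norm := module) hbal • v

theorem specialistsAsleep_smul (hw : ∑ i, w i = 1) (hbal : θ * πs = α * πw) :
    specialistsAsleep α θ β (πw • w) (πs • v) = πs • shareAsleep θ β w v := by
  rw [specialistsAsleep, shareAsleep, massPosterior_smul hw]
  linear_combination (norm := module) -hbal • posterior β w

theorem specialists_eq_smul_share {β a s w v : ℕ → ι → ℝ} {t₀ : ℕ} (hβ : ∀ t i, 0 < β t i)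
    (hα : 0 ≤ α) (hα1 : α ≤ 1) (hθ : 0 ≤ θ) (hθ1 : θ ≤ 1) (hbal : θ * πs = α * πw)
    (hw₀ : w t₀ ∈ stdSimplex ℝ ι) (hv₀ : v t₀ ∈ stdSimplex ℝ ι)
    (ha₀ : a t₀ = πw • w t₀) (hs₀ : s t₀ = πs • v t₀)
    (hwrec : ∀ t, t₀ ≤ t → w (t + 1) = shareAwake α (β t) (w t) (v t))
    (hvrec : ∀ t, t₀ ≤ t → v (t + 1) = shareAsleep θ (β t) (w t) (v t))
    (harec : ∀ t, t₀ ≤ t → a (t + 1) = specialistsAwake α θ (β t) (a t) (s t))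
    (hsrec : ∀ t, t₀ ≤ t → s (t + 1) = specialistsAsleep α θ (β t) (a t) (s t)) :
    ∀ t, t₀ ≤ t → w t ∈ stdSimplex ℝ ι ∧ v t ∈ stdSimplex ℝ ι ∧
      a t = πw • w t ∧ s t = πs • v t := by
  intro t ht
  induction t, ht using Nat.le_induction with
  | base => exact ⟨hw₀, hv₀, ha₀, hs₀⟩
  | succ t ht ih =>
    obtain ⟨hw, hv, ha, hs⟩ := ih
    rw [hwrec t ht, hvrec t ht, harec t ht, hsrec t ht, ha, hs]
    exact ⟨shareAwake_mem_stdSimplex (hβ t) hα hα1 hw hv,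
      shareAsleep_mem_stdSimplex (hβ t) hθ hθ1 hw hv,
      specialistsAwake_smul hw.2 hbal, specialistsAsleep_smul hw.2 hbal⟩

end Steps

theorem stmt_17_general (n : ℕ) (hn : 0 < n) (α θ η : ℝ)
    (hα : 0 < α) (hα1 : α < 1) (hθ : 0 < θ) (hθ1 : θ < 1)
    (ℓ : ℕ → Fin n → ℝ)
    (a s w v : ℕ → Fin n → ℝ)
    (ha1 : ∀ i, a 1 i = (θ / (α + θ)) / n)
    (hs1 : ∀ i, s 1 i = (α / (α + θ)) / n)
    (harec : ∀ t, 1 ≤ t → ∀ i, a (t + 1) i =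
      (1 - α) * (a t i * Real.exp (-η * ℓ t i) * (∑ j, a t j) /
        ∑ j, a t j * Real.exp (-η * ℓ t j)) + θ * s t i)
    (hsrec : ∀ t, 1 ≤ t → ∀ i, s (t + 1) i =
      α * (a t i * Real.exp (-η * ℓ t i) * (∑ j, a t j) /
        ∑ j, a t j * Real.exp (-η * ℓ t j)) + (1 - θ) * s t i)
    (hw1 : ∀ i, w 1 i = 1 / n) (hv1 : ∀ i, v 1 i = 1 / n)
    (hwrec : ∀ t, 1 ≤ t → ∀ i, w (t + 1) i =
      (1 - α) * (w t i * Real.exp (-η * ℓ t i) / ∑ j, w t j * Real.exp (-η * ℓ t j))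
        + α * v t i)
    (hvrec : ∀ t, 1 ≤ t → ∀ i, v (t + 1) i =
      (1 - θ) * v t i
        + θ * (w t i * Real.exp (-η * ℓ t i) / ∑ j, w t j * Real.exp (-η * ℓ t j))) :
    ∀ t, 1 ≤ t →
      (∀ i, a t i = (θ / (α + θ)) * w t i) ∧
      (∀ i, s t i = (α / (α + θ)) * v t i) ∧
      (∑ i, a t i = θ / (α + θ)) ∧ (∑ i, s t i = α / (α + θ)) := by
  set πw := θ / (α + θ)
  set πs := α / (α + θ)
  have : Nonempty (Fin n) := ⟨⟨0, hn⟩⟩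
  have key := specialists_eq_smul_share (β := fun t i ↦ exp (-η * ℓ t i)) (πw := πw) (πs := πs)
    (fun t i ↦ exp_pos _) hα.le hα1.le hθ.le hθ1.le (by ring)
    (mem_stdSimplex_of_eq_one_div_card (by simpa using hw1))
    (mem_stdSimplex_of_eq_one_div_card (by simpa using hv1))
    (funext fun i ↦ by rw [ha1, Pi.smul_apply, hw1, smul_eq_mul, mul_one_div])
    (funext fun i ↦ by rw [hs1, Pi.smul_apply, hv1, smul_eq_mul, mul_one_div])
    (fun t ht ↦ funext (hwrec t ht)) (fun t ht ↦ funext (hvrec t ht))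
    (fun t ht ↦ funext (harec t ht)) (fun t ht ↦ funext (hsrec t ht))
  intro t ht
  obtain ⟨hw, hv, ha, hs⟩ := key t ht
  refine ⟨fun i ↦ congrFun ha i, fun i ↦ congrFun hs i, ?_, ?_⟩
  · simp [ha, ← Finset.mul_sum, hw.2]
  · simp [hs, ← Finset.mul_sum, hv.2]

/-- Proposition 1: equivalence of the partition-specialists
algorithm with Markov prior and the Share-θ algorithm. -/
theorem stmt_17 (n : ℕ) (hn : 0 < n) (α θ η : ℝ)
    (hα : 0 < α) (hα1 : α < 1) (hθ : 0 < θ) (hθ1 : θ < 1) (hη : 0 < η)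
    (ℓ : ℕ → Fin n → ℝ) (hℓ : ∀ t i, 0 ≤ ℓ t i)
    (a s w v : ℕ → Fin n → ℝ)
    (ha1 : ∀ i, a 1 i = (θ / (α + θ)) / n)
    (hs1 : ∀ i, s 1 i = (α / (α + θ)) / n)
    (harec : ∀ t, 1 ≤ t → ∀ i, a (t + 1) i =
      (1 - α) * (a t i * Real.exp (-η * ℓ t i) * (∑ j, a t j) /
        ∑ j, a t j * Real.exp (-η * ℓ t j)) + θ * s t i)
    (hsrec : ∀ t, 1 ≤ t → ∀ i, s (t + 1) i =
      α * (a t i * Real.exp (-η * ℓ t i) * (∑ j, a t j) /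
        ∑ j, a t j * Real.exp (-η * ℓ t j)) + (1 - θ) * s t i)
    (hw1 : ∀ i, w 1 i = 1 / n) (hv1 : ∀ i, v 1 i = 1 / n)
    (hwrec : ∀ t, 1 ≤ t → ∀ i, w (t + 1) i =
      (1 - α) * (w t i * Real.exp (-η * ℓ t i) / ∑ j, w t j * Real.exp (-η * ℓ t j))
        + α * v t i)
    (hvrec : ∀ t, 1 ≤ t → ∀ i, v (t + 1) i =
      (1 - θ) * v t i
        + θ * (w t i * Real.exp (-η * ℓ t i) / ∑ j, w t j * Real.exp (-η * ℓ t j))) :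
    ∀ t, 1 ≤ t →
      (∀ i, a t i = (θ / (α + θ)) * w t i) ∧
      (∀ i, s t i = (α / (α + θ)) * v t i) ∧
      (∑ i, a t i = θ / (α + θ)) ∧ (∑ i, s t i = α / (α + θ)) :=
  stmt_17_general n hn α θ η hα hα1 hθ hθ1 ℓ a s w v ha1 hs1 harec hsrec hw1 hv1 hwrec hvrec
end

section
/- Let 0 < α < 1, v ∈ Δⁿ, w ∈ relint(Δⁿ), and w' = (1−α)w + αv. Then for any u ∈ Δⁿ, D(u‖w) − D(u‖w') ≥ ln(1−α). -/
open Finset Real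

/-- relative entropy drop under the generalized share update. -/
theorem stmt_18 (n : ℕ) (α : ℝ) (hα : 0 < α) (hα1 : α < 1)
    (v w w' u : Fin n → ℝ)
    (hv : ∀ i, 0 ≤ v i) (hv1 : ∑ i, v i = 1)
    (hw : ∀ i, 0 < w i) (hw1 : ∑ i, w i = 1)
    (hw' : ∀ i, w' i = (1 - α) * w i + α * v i)
    (hu : ∀ i, 0 ≤ u i) (hu1 : ∑ i, u i = 1) :
    (∑ i, u i * Real.log (u i / w i)) - (∑ i, u i * Real.log (u i / w' i)) ≥
      Real.log (1 - α) := by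
  have h1α : (0:ℝ) < 1 - α := by linarith
  rw [← Finset.sum_sub_distrib]
  have hR : Real.log (1 - α) = ∑ i, u i * Real.log (1 - α) := by
    rw [← Finset.sum_mul, hu1, one_mul]
  rw [hR]
  apply Finset.sum_le_sum
  intro i _
  rcases eq_or_lt_of_le (hu i) with h | h
  · simp [← h]
  · have hwi := hw i
    have hw'pos : 0 < w' i := by
      rw [hw' i]
      have := hv i
      nlinarith
    have hge : (1 - α) * w i ≤ w' i := by
      rw [hw' i]; have := hv i; nlinarith
    have : Real.log (1 - α) + Real.log (w i) ≤ Real.log (w' i) := by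
      rw [← Real.log_mul (ne_of_gt h1α) (ne_of_gt hwi)]
      exact Real.log_le_log (by positivity) hge
    rw [Real.log_div (ne_of_gt h) (ne_of_gt hwi), Real.log_div (ne_of_gt h) (ne_of_gt hw'pos)]
    nlinarith
end
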